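/- arXiv:1610.06448 — 5 statements merged into one kernel-verified Lean document; each statement's English description precedes it below -/
import Mathlib

section
/- Let K be a field of characteristic p > 0 and let γ, δ ∈ K with γ ∉ K^p and δ ∉ K^p, where K^p = {c^p : c ∈ K}. If γ^{p^t} + δ^{p^s} = 1 for nonnegative integers t and s, then t = s. -/
private lemma frob_aux {K : Type*} [Field K] (p : ℕ) (hp : p.Prime) [CharP K p]
    (γ δ : K) (t s : ℕ) (hts : t < s) (h : γ ^ (p ^ t) + δ ^ (p ^ s) = 1) :
    ∃ c : K, c ^ p = γ := by
  haveI : Fact p.Prime := ⟨hp⟩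
  haveI : ExpChar K p := ExpChar.prime hp
  have hδpow : (δ ^ (p ^ (s - t))) ^ (p ^ t) = δ ^ (p ^ s) := by
    rw [← pow_mul, ← pow_add, Nat.sub_add_cancel hts.le]
  have h1 : (γ + δ ^ (p ^ (s - t))) ^ (p ^ t) = 1 ^ (p ^ t) := by
    rw [add_pow_char_pow, hδpow, one_pow, h]
  have h2 : γ + δ ^ (p ^ (s - t)) = 1 := by
    have hinj : Function.Injective (iterateFrobenius K p t) :=
      (iterateFrobenius K p t).injective
    have := hinj (a₁ := γ + δ ^ (p ^ (s - t))) (a₂ := 1) (by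
      simpa [iterateFrobenius_def] using h1)
    exact this
  refine ⟨1 - δ ^ (p ^ (s - t - 1)), ?_⟩
  have hst : s - t = (s - t - 1) + 1 := by omega
  rw [sub_pow_char, one_pow, ← pow_mul, ← pow_succ, ← hst]
  linear_combination -h2

/-- Let `K` be a field of characteristic `p > 0` and let `γ, δ ∈ K` with
`γ ∉ K^p` and `δ ∉ K^p`. If `γ^{p^t} + δ^{p^s} = 1` for nonnegative integers
`t` and `s`, then `t = s`. -/
theorem frobenius_exponents_eq
    {K : Type*} [Field K] (p : ℕ) (hp : p.Prime) [CharP K p]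
    (γ δ : K) (hγ : γ ∉ Set.range fun c : K => c ^ p)
    (hδ : δ ∉ Set.range fun c : K => c ^ p)
    (t s : ℕ) (h : γ ^ (p ^ t) + δ ^ (p ^ s) = 1) :
    t = s := by
  rcases lt_trichotomy t s with hts | hts | hts
  · exact absurd (frob_aux p hp γ δ t s hts h) (by simpa [Set.range] using hγ)
  · exact hts
  · have h' : δ ^ (p ^ s) + γ ^ (p ^ t) = 1 := by linear_combination h
    exact absurd (frob_aux p hp δ γ s t hts h') (by simpa [Set.range] using hδ)
end

section
/- With the height h defined from a family of normalized discrete valuations with positive integer degrees satisfying the finite-support condition and the sum formula: if γ, δ ∈ K^* satisfy γ + δ = 1, then h(γ) = h(δ). -/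
/- Setup: `K` a field, `(v i)_{i ∈ I}` a family of normalized additive discrete
valuations on `K`, `deg i` positive integer degrees, satisfying the
finite-support condition and the sum formula `∑ᶠ i, v i x * deg i = 0` for all
`x ∈ K*`. The height of `x ∈ K*` is `h x = ∑ᶠ i, max 0 (v i x) * deg i`. -/

/-- If `γ + δ = 1` with `γ, δ ∈ K*`, then `h(γ) = h(δ)`. -/
theorem height_eq_of_add_eq_one
    {K : Type*} [Field K] {I : Type*}
    (v : I → K → ℤ) (deg : I → ℤ) (hdeg : ∀ i, 0 < deg i)
    (hmul : ∀ (i : I) (x y : K), x ≠ 0 → y ≠ 0 → v i (x * y) = v i x + v i y)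
    (hadd : ∀ (i : I) (x y : K), x ≠ 0 → y ≠ 0 → x + y ≠ 0 →
      min (v i x) (v i y) ≤ v i (x + y))
    (hfin : ∀ x : K, x ≠ 0 → {i : I | v i x ≠ 0}.Finite)
    (hsumformula : ∀ x : K, x ≠ 0 → ∑ᶠ i : I, v i x * deg i = 0)
    (h : K → ℤ) (hheight : ∀ x : K, x ≠ 0 → h x = ∑ᶠ i : I, max 0 (v i x) * deg i)
    (γ δ : K) (hγ : γ ≠ 0) (hδ : δ ≠ 0) (hγδ : γ + δ = 1) :
    h γ = h δ := by
  have v1 : ∀ i, v i (1 : K) = 0 := by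
    intro i
    have := hmul i 1 1 one_ne_zero one_ne_zero
    rw [one_mul] at this
    omega
  have vneg1 : ∀ i, v i (-1 : K) = 0 := by
    intro i
    have := hmul i (-1) (-1) (by norm_num) (by norm_num)
    rw [neg_mul_neg, one_mul, v1 i] at this
    omega
  have vneg : ∀ i (x : K), x ≠ 0 → v i (-x) = v i x := by
    intro i x hx
    have := hmul i (-1) x (by norm_num) hx
    rw [neg_one_mul, vneg1 i, zero_add] at this
    exact this
  -- pointwise: max 0 (-(v i γ)) = max 0 (-(v i δ))
  have ptwise : ∀ i, max 0 (-(v i γ)) = max 0 (-(v i δ)) := by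
    intro i
    have hδeq : (1 : K) + -γ = δ := by rw [← hγδ]; ring
    have hγeq : (1 : K) + -δ = γ := by rw [← hγδ]; ring
    have h1 : min (v i (1 : K)) (v i (-γ)) ≤ v i ((1 : K) + -γ) :=
      hadd i 1 (-γ) one_ne_zero (neg_ne_zero.2 hγ) (by rw [hδeq]; exact hδ)
    have h2 : min (v i (1 : K)) (v i (-δ)) ≤ v i ((1 : K) + -δ) :=
      hadd i 1 (-δ) one_ne_zero (neg_ne_zero.2 hδ) (by rw [hγeq]; exact hγ)
    rw [hδeq, v1 i, vneg i γ hγ] at h1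
    rw [hγeq, v1 i, vneg i δ hδ] at h2
    omega
  -- reformulate height via negative parts
  have key : ∀ x : K, x ≠ 0 →
      (∑ᶠ i : I, max 0 (v i x) * deg i) = ∑ᶠ i : I, max 0 (-(v i x)) * deg i := by
    intro x hx
    have hfs1 : (Function.support fun i => v i x * deg i).Finite :=
      (hfin x hx).subset (by
        intro i hi
        simp only [Function.mem_support] at hi
        simp only [Set.mem_setOf_eq]
        intro h0
        exact hi (by rw [h0]; ring))
    have hfs2 : (Function.support fun i => max 0 (-(v i x)) * deg i).Finite :=
      (hfin x hx).subset (by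
        intro i hi
        simp only [Function.mem_support] at hi
        simp only [Set.mem_setOf_eq]
        intro h0
        exact hi (by rw [h0]; simp))
    calc (∑ᶠ i : I, max 0 (v i x) * deg i)
        = ∑ᶠ i : I, (v i x * deg i + max 0 (-(v i x)) * deg i) := by
          apply finsum_congr
          intro i
          rw [← add_mul]
          congr 1
          omega
      _ = (∑ᶠ i : I, v i x * deg i) + ∑ᶠ i : I, max 0 (-(v i x)) * deg i :=
          finsum_add_distrib hfs1 hfs2
      _ = ∑ᶠ i : I, max 0 (-(v i x)) * deg i := by
          rw [hsumformula x hx, zero_add]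
  rw [hheight γ hγ, hheight δ hδ, key γ hγ, key δ hδ]
  exact finsum_congr fun i => by rw [ptwise i]
end

section
/- With the height h defined from a family of normalized discrete valuations with positive integer degrees satisfying the finite-support condition and the sum formula: let p be a prime, let a, b, x, y, γ, δ ∈ K^*, let m, n > 1 be integers with gcd(m, p) = gcd(n, p) = 1, and let t ∈ ℤ_{≥0} be such that a·x^m = γ^{p^t}, b·y^n = δ^{p^t} and γ + δ = 1. Define N_1 = {i ∈ I : v_i(a) = 0, v_i(b) = 0, v_i(γ) > 0}. Then N_1 is finite and h(γ) = h(δ) ≥ m · Σ_{i ∈ N_1} deg_i. -/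
/- Setup: `K` a field, `(v i)_{i ∈ I}` a family of normalized additive discrete
valuations on `K`, `deg i` positive integer degrees, satisfying the
finite-support condition and the sum formula `∑ᶠ i, v i x * deg i = 0` for all
`x ∈ K*`. The height of `x ∈ K*` is `h x = ∑ᶠ i, max 0 (v i x) * deg i`. -/

/-- Let `a·x^m = γ^{p^t}`, `b·y^n = δ^{p^t}` and `γ + δ = 1` with `m, n > 1`
coprime to the prime `p`. Then `N₁ = {i : v_i(a) = 0, v_i(b) = 0, v_i(γ) > 0}`
is finite and `h(γ) = h(δ) ≥ m · ∑_{i ∈ N₁} deg i`. -/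
theorem height_ge_m_mul_sum_N1
    {K : Type*} [Field K] {I : Type*}
    (v : I → K → ℤ) (deg : I → ℤ) (hdeg : ∀ i, 0 < deg i)
    (hmul : ∀ (i : I) (x y : K), x ≠ 0 → y ≠ 0 → v i (x * y) = v i x + v i y)
    (hadd : ∀ (i : I) (x y : K), x ≠ 0 → y ≠ 0 → x + y ≠ 0 →
      min (v i x) (v i y) ≤ v i (x + y))
    (hfin : ∀ x : K, x ≠ 0 → {i : I | v i x ≠ 0}.Finite)
    (hsumformula : ∀ x : K, x ≠ 0 → ∑ᶠ i : I, v i x * deg i = 0)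
    (h : K → ℤ) (hheight : ∀ x : K, x ≠ 0 → h x = ∑ᶠ i : I, max 0 (v i x) * deg i)
    (p : ℕ) (hp : p.Prime)
    (a b x y γ δ : K) (ha : a ≠ 0) (hb : b ≠ 0) (hx : x ≠ 0) (hy : y ≠ 0)
    (hγ : γ ≠ 0) (hδ : δ ≠ 0)
    (m n : ℕ) (hm : 1 < m) (hn : 1 < n)
    (hmp : Nat.gcd m p = 1) (hnp : Nat.gcd n p = 1)
    (t : ℕ) (heq1 : a * x ^ m = γ ^ (p ^ t)) (heq2 : b * y ^ n = δ ^ (p ^ t))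
    (hγδ : γ + δ = 1) :
    {i : I | v i a = 0 ∧ v i b = 0 ∧ 0 < v i γ}.Finite ∧
    h γ = h δ ∧
    (m : ℤ) * ∑ᶠ i ∈ {i : I | v i a = 0 ∧ v i b = 0 ∧ 0 < v i γ}, deg i ≤ h γ := by
  -- basic valuation facts
  have hv1 : ∀ i : I, v i (1 : K) = 0 := by
    intro i
    have h1 := hmul i 1 1 one_ne_zero one_ne_zero
    simp only [mul_one] at h1
    linarith
  have hvm1 : ∀ i : I, v i (-1 : K) = 0 := by
    intro i
    have h1 := hmul i (-1) (-1) (by norm_num) (by norm_num)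
    simp only [neg_mul, neg_neg, one_mul] at h1
    have h2 := hv1 i
    linarith
  have hvneg : ∀ (i : I) (z : K), z ≠ 0 → v i (-z) = v i z := by
    intro i z hz
    have h1 := hmul i (-1) z (by norm_num) hz
    rw [neg_one_mul] at h1
    rw [h1, hvm1, zero_add]
  have hvpow : ∀ (i : I) (z : K), z ≠ 0 → ∀ k : ℕ, v i (z ^ k) = k * v i z := by
    intro i z hz k
    induction k with
    | zero => simpa using hv1 i
    | succ k ih =>
      rw [pow_succ, hmul i _ _ (pow_ne_zero _ hz) hz, ih]
      push_cast; ring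
  -- pointwise relation between v γ and v δ
  have key : ∀ i : I, max 0 (-(v i γ)) = max 0 (-(v i δ)) := by
    intro i
    have hδ1 : (1 : K) + -γ = δ := by rw [← hγδ]; ring
    have hγ1 : (1 : K) + -δ = γ := by rw [← hγδ]; ring
    have h2 : min 0 (v i γ) ≤ v i δ := by
      have := hadd i 1 (-γ) one_ne_zero (neg_ne_zero.2 hγ) (hδ1 ▸ hδ)
      rw [hδ1, hv1, hvneg i γ hγ] at this
      exact this
    have h3 : min 0 (v i δ) ≤ v i γ := by
      have := hadd i 1 (-δ) one_ne_zero (neg_ne_zero.2 hδ) (hγ1 ▸ hγ)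
      rw [hγ1, hv1, hvneg i δ hδ] at this
      exact this
    omega
  -- the flip lemma from the sum formula
  have flip : ∀ z : K, z ≠ 0 →
      ∑ᶠ i : I, max 0 (v i z) * deg i = ∑ᶠ i : I, max 0 (-(v i z)) * deg i := by
    intro z hz
    classical
    set T := (hfin z hz).toFinset with hT
    have hmem : ∀ i : I, v i z ≠ 0 → i ∈ T := by
      intro i hi; simp [hT, Set.Finite.mem_toFinset, hi]
    have e1 : ∑ᶠ i : I, max 0 (v i z) * deg i = ∑ i ∈ T, max 0 (v i z) * deg i := by
      apply finsum_eq_finset_sum_of_support_subset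
      intro i hi
      simp only [Function.mem_support] at hi
      by_contra hc
      have h0 : v i z = 0 := by
        by_contra h0; exact hc (hmem i h0)
      simp [h0] at hi
    have e2 : ∑ᶠ i : I, max 0 (-(v i z)) * deg i = ∑ i ∈ T, max 0 (-(v i z)) * deg i := by
      apply finsum_eq_finset_sum_of_support_subset
      intro i hi
      simp only [Function.mem_support] at hi
      by_contra hc
      have h0 : v i z = 0 := by
        by_contra h0; exact hc (hmem i h0)
      simp [h0] at hi
    have e3 : ∑ i ∈ T, v i z * deg i = 0 := by
      rw [← finsum_eq_finset_sum_of_support_subset]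
      · exact hsumformula z hz
      · intro i hi
        simp only [Function.mem_support] at hi
        by_contra hc
        have h0 : v i z = 0 := by
          by_contra h0; exact hc (hmem i h0)
        simp [h0] at hi
    rw [e1, e2]
    have e4 : ∀ i ∈ T, max 0 (v i z) * deg i
        = v i z * deg i + max 0 (-(v i z)) * deg i := by
      intro i _
      have : max 0 (v i z) = v i z + max 0 (-(v i z)) := by omega
      rw [this]; ring
    rw [Finset.sum_congr rfl e4, Finset.sum_add_distrib, e3, zero_add]
  -- finiteness of N₁
  have hsubN : {i : I | v i a = 0 ∧ v i b = 0 ∧ 0 < v i γ} ⊆ {i : I | v i γ ≠ 0} := by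
    intro i hi; exact ne_of_gt hi.2.2
  have hN1fin : {i : I | v i a = 0 ∧ v i b = 0 ∧ 0 < v i γ}.Finite :=
    (hfin γ hγ).subset hsubN
  refine ⟨hN1fin, ?_, ?_⟩
  · -- h γ = h δ
    rw [hheight γ hγ, hheight δ hδ, flip γ hγ, flip δ hδ]
    exact finsum_congr fun i => by rw [key i]
  · -- the lower bound
    classical
    -- m ≤ v i γ on N₁
    have hmle : ∀ i : I, v i a = 0 → 0 < v i γ → (m : ℤ) ≤ v i γ := by
      intro i hia hipos
      have hval : v i a + (m : ℤ) * v i x = (p ^ t : ℤ) * v i γ := by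
        have h1 := hmul i a (x ^ m) ha (pow_ne_zero _ hx)
        rw [heq1, hvpow i γ hγ, hvpow i x hx] at h1
        push_cast at h1 ⊢
        linarith
      rw [hia, zero_add] at hval
      have hdvd : (m : ℤ) ∣ (p ^ t : ℤ) * v i γ := ⟨v i x, hval.symm⟩
      have hcop : IsCoprime (m : ℤ) ((p : ℤ) ^ t) := by
        rw [Int.isCoprime_iff_gcd_eq_one]
        have : Nat.Coprime m (p ^ t) := (Nat.coprime_iff_gcd_eq_one.mpr hmp).pow_right t
        have h2 : ((p : ℤ) ^ t) = ((p ^ t : ℕ) : ℤ) := by push_cast; ring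
        rw [h2, Int.gcd_natCast_natCast]
        exact this
      have hdvd2 : (m : ℤ) ∣ v i γ := by
        exact hcop.dvd_of_dvd_mul_left (by exact_mod_cast hdvd)
      exact Int.le_of_dvd hipos hdvd2
    set N := hN1fin.toFinset with hN
    set T := (hfin γ hγ).toFinset with hT
    have hNT : N ⊆ T := by
      intro i hi
      simp only [hN, hT, Set.Finite.mem_toFinset] at hi ⊢
      exact hsubN hi
    have eN : ∑ᶠ i ∈ {i : I | v i a = 0 ∧ v i b = 0 ∧ 0 < v i γ}, deg i
        = ∑ i ∈ N, deg i := by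
      rw [← hN1fin.coe_toFinset, finsum_mem_coe_finset]
    have eT : h γ = ∑ i ∈ T, max 0 (v i γ) * deg i := by
      rw [hheight γ hγ]
      apply finsum_eq_finset_sum_of_support_subset
      intro i hi
      simp only [Function.mem_support] at hi
      by_contra hc
      have h0 : v i γ = 0 := by
        by_contra h0
        exact hc (by simp [hT, Set.Finite.mem_toFinset, h0])
      simp [h0] at hi
    rw [eN, eT, Finset.mul_sum]
    calc ∑ i ∈ N, (m : ℤ) * deg i
        ≤ ∑ i ∈ N, max 0 (v i γ) * deg i := by
          apply Finset.sum_le_sum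
          intro i hi
          simp only [hN, Set.Finite.mem_toFinset, Set.mem_setOf_eq] at hi
          have := hmle i hi.1 hi.2.2
          have hd := hdeg i
          have : (m : ℤ) ≤ max 0 (v i γ) := le_max_of_le_right this
          exact mul_le_mul_of_nonneg_right this (le_of_lt hd)
      _ ≤ ∑ i ∈ T, max 0 (v i γ) * deg i := by
          apply Finset.sum_le_sum_of_subset_of_nonneg hNT
          intro i _ _
          exact mul_nonneg (le_max_left _ _) (le_of_lt (hdeg i))
end

section
/- With the height h defined from a family of normalized discrete valuations with positive integer degrees satisfying the finite-support condition and the sum formula: let p be a prime, let a, b, x, y, γ, δ ∈ K^*, let m, n > 1 be integers with gcd(m, p) = gcd(n, p) = 1, and let t ∈ ℤ_{≥0} be such that a·x^m = γ^{p^t}, b·y^n = δ^{p^t} and γ + δ = 1. Define N_2 = {i ∈ I : v_i(a) = 0, v_i(b) = 0, v_i(δ) > 0}. Then N_2 is finite and h(γ) = h(δ) ≥ n · Σ_{i ∈ N_2} deg_i. -/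
/- Setup: `K` a field, `(v i)_{i ∈ I}` a family of normalized additive discrete
valuations on `K`, `deg i` positive integer degrees, satisfying the
finite-support condition and the sum formula `∑ᶠ i, v i x * deg i = 0` for all
`x ∈ K*`. The height of `x ∈ K*` is `h x = ∑ᶠ i, max 0 (v i x) * deg i`. -/

/-- Let `a·x^m = γ^{p^t}`, `b·y^n = δ^{p^t}` and `γ + δ = 1` with `m, n > 1`
coprime to the prime `p`. Then `N₂ = {i : v_i(a) = 0, v_i(b) = 0, v_i(δ) > 0}`
is finite and `h(γ) = h(δ) ≥ n · ∑_{i ∈ N₂} deg i`. -/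
theorem height_ge_n_mul_sum_N2
    {K : Type*} [Field K] {I : Type*}
    (v : I → K → ℤ) (deg : I → ℤ) (hdeg : ∀ i, 0 < deg i)
    (hmul : ∀ (i : I) (x y : K), x ≠ 0 → y ≠ 0 → v i (x * y) = v i x + v i y)
    (hadd : ∀ (i : I) (x y : K), x ≠ 0 → y ≠ 0 → x + y ≠ 0 →
      min (v i x) (v i y) ≤ v i (x + y))
    (hfin : ∀ x : K, x ≠ 0 → {i : I | v i x ≠ 0}.Finite)
    (hsumformula : ∀ x : K, x ≠ 0 → ∑ᶠ i : I, v i x * deg i = 0)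
    (h : K → ℤ) (hheight : ∀ x : K, x ≠ 0 → h x = ∑ᶠ i : I, max 0 (v i x) * deg i)
    (p : ℕ) (hp : p.Prime)
    (a b x y γ δ : K) (ha : a ≠ 0) (hb : b ≠ 0) (hx : x ≠ 0) (hy : y ≠ 0)
    (hγ : γ ≠ 0) (hδ : δ ≠ 0)
    (m n : ℕ) (hm : 1 < m) (hn : 1 < n)
    (hmp : Nat.gcd m p = 1) (hnp : Nat.gcd n p = 1)
    (t : ℕ) (heq1 : a * x ^ m = γ ^ (p ^ t)) (heq2 : b * y ^ n = δ ^ (p ^ t))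
    (hγδ : γ + δ = 1) :
    {i : I | v i a = 0 ∧ v i b = 0 ∧ 0 < v i δ}.Finite ∧
    h γ = h δ ∧
    (n : ℤ) * ∑ᶠ i ∈ {i : I | v i a = 0 ∧ v i b = 0 ∧ 0 < v i δ}, deg i ≤ h γ := by
  -- basic valuation facts
  have v1 : ∀ i, v i (1 : K) = 0 := by
    intro i
    have := hmul i 1 1 one_ne_zero one_ne_zero
    rw [mul_one] at this; omega
  have vneg : ∀ i (z : K), z ≠ 0 → v i (-z) = v i z := by
    intro i z hz
    have hm1 : v i (-1 : K) = 0 := by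
      have := hmul i (-1) (-1) (by norm_num) (by norm_num)
      rw [neg_mul_neg, one_mul, v1 i] at this; omega
    have := hmul i (-1) z (by norm_num) hz
    rw [neg_one_mul] at this
    rw [this, hm1]; ring
  have vpow : ∀ i (z : K) (k : ℕ), z ≠ 0 → v i (z ^ k) = (k : ℤ) * v i z := by
    intro i z k hz
    induction k with
    | zero => simp [v1 i]
    | succ k ih =>
        rw [pow_succ, hmul i _ z (pow_ne_zero _ hz) hz, ih]
        push_cast; ring
  -- min estimates from γ + δ = 1
  have keymin1 : ∀ i, min 0 (v i γ) ≤ v i δ := by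
    intro i
    have hδeq : (1 : K) + (-γ) = δ := by linear_combination -hγδ
    have := hadd i 1 (-γ) one_ne_zero (neg_ne_zero.2 hγ) (hδeq ▸ hδ)
    rw [v1 i, vneg i γ hγ, hδeq] at this
    exact this
  have keymin2 : ∀ i, min 0 (v i δ) ≤ v i γ := by
    intro i
    have hγeq : (1 : K) + (-δ) = γ := by linear_combination -hγδ
    have := hadd i 1 (-δ) one_ne_zero (neg_ne_zero.2 hδ) (hγeq ▸ hγ)
    rw [v1 i, vneg i δ hδ, hγeq] at this
    exact this
  have negeq : ∀ i, max 0 (-(v i γ)) = max 0 (-(v i δ)) := by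
    intro i
    have h1 := keymin1 i
    have h2 := keymin2 i
    omega
  -- finiteness of N₂
  set N₂ : Set I := {i : I | v i a = 0 ∧ v i b = 0 ∧ 0 < v i δ} with hN₂
  have hN2fin : N₂.Finite := (hfin δ hδ).subset (by
    intro i hi
    exact hi.2.2.ne')
  -- finite supports
  have hsupp : ∀ (z : K), z ≠ 0 → ∀ (F : ℤ → ℤ), F 0 = 0 →
      (Function.support fun i => F (v i z) * deg i).Finite := by
    intro z hz F hF
    refine (hfin z hz).subset fun i hi => ?_
    simp only [Function.mem_support] at hi
    simp only [Set.mem_setOf_eq]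
    intro hvz
    apply hi
    rw [hvz, hF, zero_mul]
  have hsγp := hsupp γ hγ (fun s => max 0 s) (by simp)
  have hsγn := hsupp γ hγ (fun s => max 0 (-s)) (by simp)
  have hsδp := hsupp δ hδ (fun s => max 0 s) (by simp)
  have hsδn := hsupp δ hδ (fun s => max 0 (-s)) (by simp)
  -- positive part sum = negative part sum
  have hpn : ∀ (z : K), z ≠ 0 →
      (Function.support fun i => max 0 (v i z) * deg i).Finite →
      (Function.support fun i => max 0 (-(v i z)) * deg i).Finite →
      ∑ᶠ i, max 0 (v i z) * deg i = ∑ᶠ i, max 0 (-(v i z)) * deg i := by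
    intro z hz hfp hfn
    have key : ∑ᶠ i, (max 0 (v i z) * deg i - max 0 (-(v i z)) * deg i) =
        (∑ᶠ i, max 0 (v i z) * deg i) - ∑ᶠ i, max 0 (-(v i z)) * deg i :=
      finsum_sub_distrib hfp hfn
    have e : ∀ i, max 0 (v i z) * deg i - max 0 (-(v i z)) * deg i = v i z * deg i := by
      intro i
      have hmx : max 0 (v i z) - max 0 (-(v i z)) = v i z := by omega
      rw [← sub_mul, hmx]
    rw [finsum_congr e, hsumformula z hz] at key
    omega
  have hγeqδ : h γ = h δ := by
    rw [hheight γ hγ, hheight δ hδ, hpn γ hγ hsγp hsγn, hpn δ hδ hsδp hsδn]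
    exact finsum_congr fun i => by rw [negeq i]
  refine ⟨hN2fin, hγeqδ, ?_⟩
  -- lower bound for v i δ on N₂
  have hvge : ∀ i, v i b = 0 → 0 < v i δ → (n : ℤ) ≤ v i δ := by
    intro i hib hipos
    have e := congrArg (v i) heq2
    rw [hmul i b (y ^ n) hb (pow_ne_zero _ hy), vpow i y n hy, vpow i δ (p ^ t) hδ,
      hib] at e
    have hdvd : (n : ℤ) ∣ ((p : ℤ) ^ t * v i δ) := ⟨v i y, by push_cast at e ⊢; linarith⟩
    have hcop : IsCoprime (n : ℤ) ((p : ℤ) ^ t) := by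
      have hc : Nat.Coprime n (p ^ t) := Nat.Coprime.pow_right t hnp
      have := Nat.isCoprime_iff_coprime.mpr hc
      push_cast at this
      exact this
    exact Int.le_of_dvd hipos (hcop.dvd_of_dvd_mul_left hdvd)
  -- sums over finsets
  classical
  set S : Finset I := (hfin δ hδ).toFinset with hS
  set T : Finset I := hN2fin.toFinset with hT
  have hTS : T ⊆ S := by
    intro i hi
    rw [hT, Set.Finite.mem_toFinset] at hi
    rw [hS, Set.Finite.mem_toFinset]
    exact hi.2.2.ne'
  have hsum1 : ∑ᶠ i ∈ N₂, deg i = ∑ i ∈ T, deg i :=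
    finsum_mem_eq_finite_toFinset_sum _ hN2fin
  have hsum2 : ∑ᶠ i, max 0 (v i δ) * deg i = ∑ i ∈ S, max 0 (v i δ) * deg i := by
    refine finsum_eq_finset_sum_of_support_subset _ ?_
    intro i hi
    simp only [Function.mem_support] at hi
    rw [Set.Finite.coe_toFinset]
    simp only [Set.mem_setOf_eq]
    intro hvz
    apply hi
    rw [hvz, max_self, zero_mul]
  rw [hγeqδ, hheight δ hδ, hsum1, hsum2, Finset.mul_sum]
  calc ∑ i ∈ T, (n : ℤ) * deg i ≤ ∑ i ∈ T, max 0 (v i δ) * deg i := by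
        refine Finset.sum_le_sum ?_
        intro i hi
        rw [hT, Set.Finite.mem_toFinset] at hi
        have hv := hvge i hi.2.1 hi.2.2
        have hmx : max 0 (v i δ) = v i δ := by omega
        rw [hmx]
        exact mul_le_mul_of_nonneg_right hv (hdeg i).le
    _ ≤ ∑ i ∈ S, max 0 (v i δ) * deg i := by
        refine Finset.sum_le_sum_of_subset_of_nonneg hTS ?_
        intro i _ _
        have hd := (hdeg i).le
        positivity
end

section
/- With the height h defined from a family of normalized discrete valuations with positive integer degrees satisfying the finite-support condition and the sum formula: let p be a prime, let a, b, x, y, γ, δ ∈ K^*, let m, n > 1 be integers with gcd(m, p) = gcd(n, p) = 1, and let t ∈ ℤ_{≥0} be such that a·x^m = γ^{p^t}, b·y^n = δ^{p^t} and γ + δ = 1. Define N_3 = {i ∈ I : v_i(a) = 0, v_i(b) = 0, v_i(γ) = v_i(δ) < 0}. Then N_3 is finite and h(γ) = h(δ) ≥ lcm(m, n) · Σ_{i ∈ N_3} deg_i. -/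
/-!
At a place where `a` is a unit, `m · v(x) = p^t · v(γ)` and `m` is prime to `p`, so `m ∣ v(γ)`;
likewise `n ∣ v(δ)` where `b` is a unit. Since `γ + δ = 1`, the ultrametric inequality forces `γ`
and `δ` to have the same poles with the same orders, so on `N₃` the common pole order is a
positive multiple of `lcm(m, n)`. By the sum formula the height is also the weighted count of
poles, which gives both `h(γ) = h(δ)` and the lower bound.
-/

open Function

section Valuation

variable {K : Type*} [Field K] {w : K → ℤ}

lemma val_one_of_map_mul (hmul : ∀ x y : K, x ≠ 0 → y ≠ 0 → w (x * y) = w x + w y) :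
    w 1 = 0 := by
  have := hmul 1 1 one_ne_zero one_ne_zero
  rw [mul_one] at this
  omega

lemma val_pow_of_map_mul (hmul : ∀ x y : K, x ≠ 0 → y ≠ 0 → w (x * y) = w x + w y)
    {z : K} (hz : z ≠ 0) (k : ℕ) : w (z ^ k) = k * w z := by
  induction k with
  | zero => simp [val_one_of_map_mul hmul]
  | succ k ih =>
    rw [pow_succ, hmul _ z (pow_ne_zero _ hz) hz, ih]
    push_cast
    ring

lemma val_neg_of_map_mul (hmul : ∀ x y : K, x ≠ 0 → y ≠ 0 → w (x * y) = w x + w y)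
    {z : K} (hz : z ≠ 0) : w (-z) = w z := by
  have hsq := hmul (-1) (-1) (by norm_num) (by norm_num)
  rw [neg_one_mul, neg_neg, val_one_of_map_mul hmul] at hsq
  rw [← neg_one_mul, hmul (-1) z (by norm_num) hz]
  omega

lemma dvd_val_of_mul_pow_eq_pow (hmul : ∀ x y : K, x ≠ 0 → y ≠ 0 → w (x * y) = w x + w y)
    {c z u : K} {k q : ℕ} (hc : c ≠ 0) (hz : z ≠ 0) (hu : u ≠ 0) (hkq : k.Coprime q)
    (hwc : w c = 0) (h : c * z ^ k = u ^ q) : (k : ℤ) ∣ w u := by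
  have hval := congrArg w h
  rw [hmul c _ hc (pow_ne_zero _ hz), hwc, zero_add, val_pow_of_map_mul hmul hz,
    val_pow_of_map_mul hmul hu] at hval
  exact (Nat.isCoprime_iff_coprime.2 hkq).dvd_of_dvd_mul_left ⟨w z, hval.symm⟩

lemma min_zero_val_le_val_of_add_eq_one
    (hmul : ∀ x y : K, x ≠ 0 → y ≠ 0 → w (x * y) = w x + w y)
    (hadd : ∀ x y : K, x ≠ 0 → y ≠ 0 → x + y ≠ 0 → min (w x) (w y) ≤ w (x + y))
    {γ δ : K} (hγ : γ ≠ 0) (hδ : δ ≠ 0) (h : γ + δ = 1) : min 0 (w δ) ≤ w γ := by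
  have hγ_eq : 1 + -δ = γ := by linear_combination -h
  have := hadd 1 (-δ) one_ne_zero (neg_ne_zero.2 hδ) (hγ_eq ▸ hγ)
  rwa [hγ_eq, val_one_of_map_mul hmul, val_neg_of_map_mul hmul hδ] at this

lemma max_zero_neg_val_eq_of_add_eq_one
    (hmul : ∀ x y : K, x ≠ 0 → y ≠ 0 → w (x * y) = w x + w y)
    (hadd : ∀ x y : K, x ≠ 0 → y ≠ 0 → x + y ≠ 0 → min (w x) (w y) ≤ w (x + y))
    {γ δ : K} (hγ : γ ≠ 0) (hδ : δ ≠ 0) (h : γ + δ = 1) : max 0 (-w γ) = max 0 (-w δ) := by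
  have h₁ := min_zero_val_le_val_of_add_eq_one hmul hadd hγ hδ h
  have h₂ := min_zero_val_le_val_of_add_eq_one hmul hadd hδ hγ (by rwa [add_comm])
  have h₃ := hadd γ δ hγ hδ (by rw [h]; exact one_ne_zero)
  rw [h, val_one_of_map_mul hmul] at h₃
  omega

end Valuation

section WeightedSum

variable {I : Type*} {f deg : I → ℤ}

lemma finsum_max_mul_eq_finsum_max_neg_mul (hf : HasFiniteSupport f)
    (hsum : ∑ᶠ i, f i * deg i = 0) :
    ∑ᶠ i, max 0 (f i) * deg i = ∑ᶠ i, max 0 (-f i) * deg i := by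
  have hdiff : ∑ᶠ i, (max 0 (f i) * deg i - max 0 (-f i) * deg i) = ∑ᶠ i, f i * deg i :=
    finsum_congr fun i => by rw [← sub_mul, max_comm, max_comm 0, max_zero_sub_eq_self]
  rw [hsum, finsum_sub_distrib (by fun_prop (disch := simp)) (by fun_prop (disch := simp))] at hdiff
  exact sub_eq_zero.1 hdiff

lemma mul_finsum_mem_le_finsum_max_neg_mul (hf : HasFiniteSupport f) (hdeg : ∀ i, 0 ≤ deg i)
    {S : Set I} {L : ℤ} (hneg : ∀ i ∈ S, f i < 0) (hL : ∀ i ∈ S, L ≤ -f i) :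
    L * ∑ᶠ i ∈ S, deg i ≤ ∑ᶠ i, max 0 (-f i) * deg i := by
  have hSf : S ⊆ support f := fun i hi => (hneg i hi).ne
  have hf : (support f).Finite := hf
  have hS : S.Finite := hf.subset hSf
  have hsupp : support (fun i => max 0 (-f i) * deg i) ⊆ hf.toFinset := fun i hi => by
    rw [Set.Finite.coe_toFinset, mem_support]
    rintro hfi
    simp [hfi] at hi
  rw [finsum_mem_eq_finite_toFinset_sum _ hS, Finset.mul_sum,
    finsum_eq_sum_of_support_subset _ hsupp]
  calc ∑ i ∈ hS.toFinset, L * deg i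
      ≤ ∑ i ∈ hS.toFinset, max 0 (-f i) * deg i := by
        refine Finset.sum_le_sum fun i hi => mul_le_mul_of_nonneg_right ?_ (hdeg i)
        exact (hL i (hS.mem_toFinset.1 hi)).trans (le_max_right _ _)
    _ ≤ ∑ i ∈ hf.toFinset, max 0 (-f i) * deg i :=
        Finset.sum_le_sum_of_subset_of_nonneg (Set.Finite.toFinset_subset_toFinset.2 hSf)
          fun i _ _ => mul_nonneg (le_max_left _ _) (hdeg i)

end WeightedSum

theorem height_ge_lcm_mul_sum_N3_general
    {K : Type*} [Field K] {I : Type*}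
    (v : I → K → ℤ) (deg : I → ℤ) (hdeg : ∀ i, 0 < deg i)
    (hmul : ∀ (i : I) (x y : K), x ≠ 0 → y ≠ 0 → v i (x * y) = v i x + v i y)
    (hadd : ∀ (i : I) (x y : K), x ≠ 0 → y ≠ 0 → x + y ≠ 0 →
      min (v i x) (v i y) ≤ v i (x + y))
    (hfin : ∀ x : K, x ≠ 0 → {i : I | v i x ≠ 0}.Finite)
    (hsumformula : ∀ x : K, x ≠ 0 → ∑ᶠ i : I, v i x * deg i = 0)
    (h : K → ℤ) (hheight : ∀ x : K, x ≠ 0 → h x = ∑ᶠ i : I, max 0 (v i x) * deg i)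
    (p : ℕ)
    (a b x y γ δ : K) (ha : a ≠ 0) (hb : b ≠ 0) (hx : x ≠ 0) (hy : y ≠ 0)
    (hγ : γ ≠ 0) (hδ : δ ≠ 0)
    (m n : ℕ)
    (hmp : Nat.gcd m p = 1) (hnp : Nat.gcd n p = 1)
    (t : ℕ) (heq1 : a * x ^ m = γ ^ (p ^ t)) (heq2 : b * y ^ n = δ ^ (p ^ t))
    (hγδ : γ + δ = 1) :
    {i : I | v i a = 0 ∧ v i b = 0 ∧ v i γ = v i δ ∧ v i γ < 0}.Finite ∧
    h γ = h δ ∧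
    (Nat.lcm m n : ℤ) *
      ∑ᶠ i ∈ {i : I | v i a = 0 ∧ v i b = 0 ∧ v i γ = v i δ ∧ v i γ < 0}, deg i
      ≤ h γ := by
  have hγ_poles : h γ = ∑ᶠ i, max 0 (-v i γ) * deg i := by
    rw [hheight γ hγ, finsum_max_mul_eq_finsum_max_neg_mul (hfin γ hγ) (hsumformula γ hγ)]
  have hδ_poles : h δ = ∑ᶠ i, max 0 (-v i δ) * deg i := by
    rw [hheight δ hδ, finsum_max_mul_eq_finsum_max_neg_mul (hfin δ hδ) (hsumformula δ hδ)]
  refine ⟨(hfin γ hγ).subset fun i hi => hi.2.2.2.ne, ?_, ?_⟩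
  · rw [hγ_poles, hδ_poles]
    exact finsum_congr fun i => by
      rw [max_zero_neg_val_eq_of_add_eq_one (hmul i) (hadd i) hγ hδ hγδ]
  · rw [hγ_poles]
    refine mul_finsum_mem_le_finsum_max_neg_mul (hfin γ hγ) (fun i => (hdeg i).le)
      (fun i hi => hi.2.2.2) fun i ⟨hva, hvb, hvγδ, hvγ⟩ => Int.le_of_dvd (by omega) ?_
    have hm : (m : ℤ) ∣ v i γ :=
      dvd_val_of_mul_pow_eq_pow (hmul i) ha hx hγ (Nat.Coprime.pow_right t hmp) hva heq1
    have hn : (n : ℤ) ∣ v i γ :=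
      hvγδ ▸ dvd_val_of_mul_pow_eq_pow (hmul i) hb hy hδ (Nat.Coprime.pow_right t hnp) hvb heq2
    exact Int.natCast_dvd.2 (Nat.lcm_dvd (Int.natCast_dvd.1 hm.neg_right)
      (Int.natCast_dvd.1 hn.neg_right))

/-- Let `a·x^m = γ^{p^t}`, `b·y^n = δ^{p^t}` and `γ + δ = 1` with `m, n > 1`
coprime to the prime `p`. Then
`N₃ = {i : v_i(a) = 0, v_i(b) = 0, v_i(γ) = v_i(δ) < 0}`
is finite and `h(γ) = h(δ) ≥ lcm(m, n) · ∑_{i ∈ N₃} deg i`. -/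
theorem height_ge_lcm_mul_sum_N3
    {K : Type*} [Field K] {I : Type*}
    (v : I → K → ℤ) (deg : I → ℤ) (hdeg : ∀ i, 0 < deg i)
    (hmul : ∀ (i : I) (x y : K), x ≠ 0 → y ≠ 0 → v i (x * y) = v i x + v i y)
    (hadd : ∀ (i : I) (x y : K), x ≠ 0 → y ≠ 0 → x + y ≠ 0 →
      min (v i x) (v i y) ≤ v i (x + y))
    (hfin : ∀ x : K, x ≠ 0 → {i : I | v i x ≠ 0}.Finite)
    (hsumformula : ∀ x : K, x ≠ 0 → ∑ᶠ i : I, v i x * deg i = 0)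
    (h : K → ℤ) (hheight : ∀ x : K, x ≠ 0 → h x = ∑ᶠ i : I, max 0 (v i x) * deg i)
    (p : ℕ) (hp : p.Prime)
    (a b x y γ δ : K) (ha : a ≠ 0) (hb : b ≠ 0) (hx : x ≠ 0) (hy : y ≠ 0)
    (hγ : γ ≠ 0) (hδ : δ ≠ 0)
    (m n : ℕ) (hm : 1 < m) (hn : 1 < n)
    (hmp : Nat.gcd m p = 1) (hnp : Nat.gcd n p = 1)
    (t : ℕ) (heq1 : a * x ^ m = γ ^ (p ^ t)) (heq2 : b * y ^ n = δ ^ (p ^ t))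
    (hγδ : γ + δ = 1) :
    {i : I | v i a = 0 ∧ v i b = 0 ∧ v i γ = v i δ ∧ v i γ < 0}.Finite ∧
    h γ = h δ ∧
    (Nat.lcm m n : ℤ) *
      ∑ᶠ i ∈ {i : I | v i a = 0 ∧ v i b = 0 ∧ v i γ = v i δ ∧ v i γ < 0}, deg i
      ≤ h γ :=
  height_ge_lcm_mul_sum_N3_general v deg hdeg hmul hadd hfin hsumformula h hheight p a b x y γ δ ha
    hb hx hy hγ hδ m n hmp hnp t heq1 heq2 hγδ
end
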